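/- (Conditional entropy of new subfiles) If the subfiles {W̄_S : S ⊆ [N], S ≠ ∅} are mutually independent with H(W̄_S) = n·R_{|S|}, then for distinct d_1, ..., d_k, H(W_{d_k} | W_{d_1}, ..., W_{d_{k-1}}) = n·Σ_{ℓ=0}^{N-k} C(N-k, ℓ)·R_{ℓ+1}, where W_i = (W̄_S : i ∈ S). -/

import Mathlib

open Finset
open scoped Classical

/-- Probability of an event on a finite sample space with pmf `p`. -/
noncomputable def prEvent {Ω : Type*} [Fintype Ω] (p : Ω → ℝ) (E : Ω → Prop)
    [DecidablePred E] : ℝ :=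
  ∑ ω ∈ Finset.univ.filter E, p ω

/-- Shannon entropy (in bits) of a finitely-valued random variable. -/
noncomputable def shannonH {Ω α : Type*} [Fintype Ω] [Fintype α] [DecidableEq α]
    (p : Ω → ℝ) (X : Ω → α) : ℝ :=
  ∑ a : α, -(prEvent p (fun ω => X ω = a) * Real.logb 2 (prEvent p (fun ω => X ω = a)))

/-- The file `W_i`: the tuple of all subfiles `W̄_S` with `i ∈ S ⊆ [N]`
(padded with `default` on subsets not containing `i`). -/
def fileRV {Ω β : Type*} [Inhabited β] (N : ℕ) (Wbar : Finset ℕ → Ω → β) (i : ℕ) :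
    Ω → ({S : Finset ℕ // S ∈ (Finset.Icc 1 N).powerset} → β) :=
  fun ω S => if i ∈ S.val then Wbar S.val ω else default

/-! Subfiles are independent, so the entropy of a family of them is the sum of their entropies,
and the tuple of files `(W_{d_1}, …, W_{d_m})` is an injective re-encoding of the family of
subfiles `W̄_S` with `S` meeting `{d_1, …, d_m}`. Hence
`H(W_{d_1}, …, W_{d_k}) - H(W_{d_1}, …, W_{d_{k-1}})` is the total entropy of the subfiles `W̄_S`
with `d_k ∈ S` and `S` disjoint from `{d_1, …, d_{k-1}}`; these `S` are `{d_k}` together with an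
arbitrary subset of the `N - k` undemanded indices, and counting them by size gives the binomial
sum. -/

section Counting

variable {α : Type*} [DecidableEq α]

lemma sum_filter_not_disjoint_insert_sub {M : Type*} [AddCommGroup M] (U D : Finset α) (x : α)
    (f : Finset α → M) :
    ∑ S ∈ U.powerset with ¬Disjoint S (insert x D), f S
      - ∑ S ∈ U.powerset with ¬Disjoint S D, f S
      = ∑ S ∈ U.powerset with x ∈ S ∧ Disjoint S D, f S := by
  rw [sub_eq_iff_eq_add', ← sum_filter_add_sum_filter_not _ fun S => ¬Disjoint S D,
    filter_filter, filter_filter]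
  congr 1 <;>
    exact sum_congr (filter_congr fun S _ => by rw [disjoint_insert_right]; tauto) fun _ _ => rfl

lemma powerset_filter_mem_and_disjoint {U D : Finset α} {x : α} (hxU : x ∈ U) (hxD : x ∉ D) :
    U.powerset.filter (fun S => x ∈ S ∧ Disjoint S D)
      = (U \ insert x D).powerset.image (insert x) := by
  ext S
  simp only [mem_filter, mem_powerset, mem_image, subset_sdiff, disjoint_insert_right]
  constructor
  · rintro ⟨hSU, hxS, hSD⟩
    exact ⟨S.erase x, ⟨(erase_subset x S).trans hSU, notMem_erase x S,
      disjoint_of_subset_left (erase_subset x S) hSD⟩, insert_erase hxS⟩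
  · rintro ⟨T, ⟨hTU, -, hTD⟩, rfl⟩
    exact ⟨insert_subset hxU hTU, mem_insert_self x T, disjoint_insert_left.2 ⟨hxD, hTD⟩⟩

lemma sum_powerset_filter_mem_and_disjoint {M : Type*} [AddCommMonoid M] {U D : Finset α}
    {x : α} (hxU : x ∈ U) (hxD : x ∉ D) (g : ℕ → M) :
    ∑ S ∈ U.powerset with x ∈ S ∧ Disjoint S D, g #S
      = ∑ ℓ ∈ range (#(U \ insert x D) + 1), (#(U \ insert x D)).choose ℓ • g (ℓ + 1) := by
  have hx : ∀ T ∈ (U \ insert x D).powerset, x ∉ T := fun T hT hxT =>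
    (mem_sdiff.1 (mem_powerset.1 hT hxT)).2 (mem_insert_self x D)
  rw [powerset_filter_mem_and_disjoint hxU hxD,
    sum_image fun T hT T' hT' h => by
      rw [← erase_insert (hx T hT), h, erase_insert (hx T' hT')],
    sum_congr rfl fun T hT => by rw [card_insert_of_notMem (hx T hT)],
    sum_powerset_apply_card fun c => g (c + 1)]

end Counting

lemma Fintype.sum_pi_mul_prod_of_sum_eq_one {ι β : Type*} [Fintype ι] [DecidableEq ι]
    [Fintype β] (q : ι → β → ℝ) (hq : ∀ i, ∑ a, q i a = 1) (i : ι) (f : β → ℝ) :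
    ∑ g : ι → β, f (g i) * ∏ j, q j (g j) = ∑ a, f a * q i a := by
  set h : ι → β → ℝ := Function.update q i fun a => f a * q i a
  have hprod : ∀ g : ι → β, f (g i) * ∏ j, q j (g j) = ∏ j, h j (g j) := by
    intro g
    rw [← Finset.mul_prod_erase _ _ (mem_univ i), ← Finset.mul_prod_erase _ (fun j => h j (g j))
      (mem_univ i), ← mul_assoc]
    congr 1
    · simp only [h, Function.update_self]
    · exact Finset.prod_congr rfl fun j hj => by
        simp only [h, Function.update_of_ne (ne_of_mem_erase hj)]
  simp only [hprod, ← Fintype.prod_sum]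
  rw [Fintype.prod_eq_single i fun j hj => by simp only [h, Function.update_of_ne hj, hq]]
  simp only [h, Function.update_self]

lemma Fin.image_univ_eq_insert_image_castLE {α : Type*} [DecidableEq α] {k : ℕ} (hk : 1 ≤ k)
    (d : Fin k → α) :
    univ.image d = insert (d ⟨k - 1, by omega⟩)
      (univ.image fun j : Fin (k - 1) => d (Fin.castLE (Nat.sub_le k 1) j)) := by
  ext y
  simp only [mem_image, mem_univ, true_and, mem_insert]
  constructor
  · rintro ⟨j, rfl⟩
    by_cases hj : (j : ℕ) = k - 1
    · exact Or.inl (congrArg d (Fin.ext hj))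
    · exact Or.inr ⟨⟨j, by omega⟩, rfl⟩
  · rintro (rfl | ⟨j, rfl⟩) <;> exact ⟨_, rfl⟩

section FiniteProbability

variable {Ω : Type*} [Fintype Ω] {p : Ω → ℝ}

lemma prEvent_congr {E E' : Ω → Prop} [DecidablePred E] [DecidablePred E']
    (h : ∀ ω, E ω ↔ E' ω) : prEvent p E = prEvent p E' := by
  simp only [prEvent, h]

lemma prEvent_eq_sum_prEvent_and {γ : Type*} [Fintype γ] [DecidableEq γ]
    (E : Ω → Prop) [DecidablePred E] (φ : Ω → γ) :
    prEvent p E = ∑ c, prEvent p (fun ω => E ω ∧ φ ω = c) := by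
  simp only [prEvent, ← filter_filter, sum_fiberwise]

lemma sum_prEvent_eq_one (hp1 : ∑ ω, p ω = 1) {α : Type*} [Fintype α] [DecidableEq α]
    (X : Ω → α) : ∑ a, prEvent p (fun ω => X ω = a) = 1 := by
  have htotal : prEvent p (fun _ => True) = 1 := by
    rw [prEvent, filter_true, hp1]
  rw [← htotal, prEvent_eq_sum_prEvent_and _ X]
  simp only [true_and]

lemma shannonH_comp_of_injective {α γ : Type*} [Fintype α] [DecidableEq α]
    [Fintype γ] [DecidableEq γ] (X : Ω → α) {F : α → γ} (hF : F.Injective) :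
    shannonH p (fun ω => F (X ω)) = shannonH p X := by
  have hzero : ∀ c ∉ univ.image F, prEvent p (fun ω => F (X ω) = c) = 0 := by
    intro c hc
    rw [prEvent, filter_false_of_mem fun ω _ (h : F (X ω) = c) =>
      hc (h ▸ mem_image_of_mem F (mem_univ _)), sum_empty]
  rw [shannonH, ← sum_subset (subset_univ _) fun c _ hc => by simp [hzero c hc],
    sum_image fun x _ y _ h => hF h]
  simp only [hF.eq_iff]
  rfl

variable {β τ : Type*} [Fintype β] [DecidableEq β]

def IndepOn (p : Ω → ℝ) (W : τ → Ω → β) (𝒜 : Finset τ) : Prop :=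
  ∀ g : τ → β, prEvent p (fun ω => ∀ S ∈ 𝒜, W S ω = g S)
    = ∏ S ∈ 𝒜, prEvent p (fun ω => W S ω = g S)

variable [DecidableEq τ] {W : τ → Ω → β}

lemma IndepOn.of_insert (hp1 : ∑ ω, p ω = 1) {𝒜 : Finset τ} {x : τ}
    (h : IndepOn p W (insert x 𝒜)) : IndepOn p W 𝒜 := by
  by_cases hx : x ∈ 𝒜
  · rwa [insert_eq_of_mem hx] at h
  intro g
  have hupdate : ∀ a, ∀ S ∈ 𝒜, Function.update g x a S = g S :=
    fun a S hS => Function.update_of_ne (ne_of_mem_of_not_mem hS hx) _ _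
  calc prEvent p (fun ω => ∀ S ∈ 𝒜, W S ω = g S)
      = ∑ a, prEvent p (fun ω => ∀ S ∈ insert x 𝒜, W S ω = Function.update g x a S) := by
        rw [prEvent_eq_sum_prEvent_and _ (W x)]
        refine sum_congr rfl fun a _ => prEvent_congr fun ω => ?_
        simp +contextual only [forall_mem_insert, Function.update_self, hupdate, and_comm]
    _ = ∑ a, prEvent p (fun ω => W x ω = a) * ∏ S ∈ 𝒜, prEvent p (fun ω => W S ω = g S) := by
        refine sum_congr rfl fun a _ => ?_
        rw [h, prod_insert hx, Function.update_self]
        congr 1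
        exact Finset.prod_congr rfl fun S hS => by rw [hupdate a S hS]
    _ = ∏ S ∈ 𝒜, prEvent p (fun ω => W S ω = g S) := by
        rw [← sum_mul, sum_prEvent_eq_one hp1, one_mul]

lemma IndepOn.mono (hp1 : ∑ ω, p ω = 1) {𝒜 𝒮 : Finset τ} (h : IndepOn p W 𝒮)
    (h𝒜 : 𝒜 ⊆ 𝒮) : IndepOn p W 𝒜 := by
  suffices ∀ 𝒞, IndepOn p W (𝒜 ∪ 𝒞) → IndepOn p W 𝒜 from
    this _ (by rwa [union_sdiff_of_subset h𝒜])
  intro 𝒞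
  induction 𝒞 using Finset.induction_on with
  | empty => simp
  | insert x 𝒞 _ ih => exact fun h => ih (IndepOn.of_insert hp1 (by rwa [← union_insert]))

lemma shannonH_pi_eq_sum_of_indep {ι : Type*} [Fintype ι] [DecidableEq ι]
    (hp1 : ∑ ω, p ω = 1) (X : ι → Ω → β)
    (hX : ∀ g : ι → β, prEvent p (fun ω => ∀ i, X i ω = g i)
      = ∏ i, prEvent p (fun ω => X i ω = g i)) :
    shannonH p (fun ω i => X i ω) = ∑ i, shannonH p (X i) := by
  set q : ι → β → ℝ := fun i a => prEvent p (fun ω => X i ω = a)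
  have hjoint : ∀ g, prEvent p (fun ω => (fun i => X i ω) = g) = ∏ i, q i (g i) :=
    fun g => (prEvent_congr fun ω => funext_iff).trans (hX g)
  have hlog : ∀ g : ι → β, -((∏ i, q i (g i)) * Real.logb 2 (∏ i, q i (g i)))
      = ∑ i, -Real.logb 2 (q i (g i)) * ∏ j, q j (g j) := by
    intro g
    by_cases hzero : ∃ i, q i (g i) = 0
    · obtain ⟨i, hi⟩ := hzero
      have hprod : ∏ j, q j (g j) = 0 := prod_eq_zero (mem_univ i) hi
      simp [hprod]
    · push Not at hzero
      rw [Real.logb_prod _ _ fun i _ => hzero i, mul_sum, ← sum_neg_distrib]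
      exact sum_congr rfl fun i _ => by ring
  calc shannonH p (fun ω i => X i ω)
      = ∑ g : ι → β, ∑ i, -Real.logb 2 (q i (g i)) * ∏ j, q j (g j) := by
        simp only [shannonH, hjoint, hlog]
    _ = ∑ i, ∑ a, -Real.logb 2 (q i a) * q i a := by
        rw [sum_comm]
        exact sum_congr rfl fun i _ => Fintype.sum_pi_mul_prod_of_sum_eq_one q
          (fun i => sum_prEvent_eq_one hp1 (X i)) i fun a => -Real.logb 2 (q i a)
    _ = ∑ i, shannonH p (X i) :=
        sum_congr rfl fun i _ => sum_congr rfl fun a _ => by ring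

lemma IndepOn.shannonH_pi [Nonempty β] (hp1 : ∑ ω, p ω = 1) {𝒜 : Finset τ}
    (h : IndepOn p W 𝒜) :
    shannonH p (fun ω (S : 𝒜) => W S ω) = ∑ S ∈ 𝒜, shannonH p (W S) := by
  rw [← sum_coe_sort]
  refine shannonH_pi_eq_sum_of_indep hp1 (fun S : 𝒜 => W S) fun g => ?_
  obtain ⟨b⟩ := ‹Nonempty β›
  set g' : τ → β := fun S => if hS : S ∈ 𝒜 then g ⟨S, hS⟩ else b
  have hg' : ∀ S : 𝒜, g' S = g S := fun S => dif_pos S.2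
  calc prEvent p (fun ω => ∀ S : 𝒜, W S ω = g S)
      = prEvent p (fun ω => ∀ S ∈ 𝒜, W S ω = g' S) :=
        prEvent_congr fun ω => by simp only [← hg', Subtype.forall]
    _ = ∏ S : 𝒜, prEvent p (fun ω => W S ω = g S) := by
        rw [h, ← prod_coe_sort]
        simp only [hg']

end FiniteProbability

lemma shannonH_fileRV_pi {Ω β ι : Type*} [Fintype Ω] [Fintype β] [DecidableEq β] [Inhabited β]
    [Fintype ι] [DecidableEq ι] {p : Ω → ℝ} (hp1 : ∑ ω, p ω = 1) {N : ℕ} {Wbar : Finset ℕ → Ω → β}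
    (hindep : IndepOn p Wbar ((Icc 1 N).powerset.filter (·.Nonempty))) (e : ι → ℕ) :
    shannonH p (fun ω j => fileRV N Wbar (e j) ω)
      = ∑ S ∈ (Icc 1 N).powerset with ¬Disjoint S (univ.image e), shannonH p (Wbar S) := by
  set A := (Icc 1 N).powerset.filter fun S => ¬Disjoint S (univ.image e)
  have hmem : ∀ j (S : {S // S ∈ (Icc 1 N).powerset}), e j ∈ S.1 → S.1 ∈ A := fun j S hj =>
    mem_filter.2 ⟨S.2, not_disjoint_iff.2 ⟨e j, hj, mem_image_of_mem e (mem_univ j)⟩⟩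
  set F : (A → β) → ι → {S // S ∈ (Icc 1 N).powerset} → β :=
    fun f j S => if hj : e j ∈ S.1 then f ⟨S.1, hmem j S hj⟩ else default
  have hF : F.Injective := by
    intro f f' hff
    funext S
    obtain ⟨hS, hmeet⟩ := mem_filter.1 S.2
    obtain ⟨_, hi, hie⟩ := not_disjoint_iff.1 hmeet
    obtain ⟨j, -, rfl⟩ := mem_image.1 hie
    simpa [F, hi] using congr_fun (congr_fun hff j) ⟨S.1, hS⟩
  have hfiles : (fun ω j => fileRV N Wbar (e j) ω) = fun ω => F fun S : A => Wbar S ω := by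
    funext ω j S
    by_cases hj : e j ∈ S.1 <;> simp [fileRV, F, hj]
  have hA : A ⊆ (Icc 1 N).powerset.filter (·.Nonempty) := fun S hS => by
    obtain ⟨hS, hmeet⟩ := mem_filter.1 hS
    exact mem_filter.2 ⟨hS, (not_disjoint_iff_nonempty_inter.1 hmeet).mono inter_subset_left⟩
  rw [hfiles]
  exact (shannonH_comp_of_injective (fun ω (S : A) => Wbar S ω) hF).trans
    ((hindep.mono hp1 hA).shannonH_pi hp1)

theorem stmt6_general {Ω β : Type*} [Fintype Ω] [Fintype β] [DecidableEq β] [Inhabited β]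
    (N n k : ℕ) (hk : 1 ≤ k)
    (R : ℕ → ℝ) (p : Ω → ℝ)
    (hp1 : ∑ ω : Ω, p ω = 1)
    (Wbar : Finset ℕ → Ω → β)
    (hindep : ∀ g : Finset ℕ → β,
      prEvent p (fun ω => ∀ S ∈ (Finset.Icc 1 N).powerset.filter (fun S => S.Nonempty),
          Wbar S ω = g S)
        = ∏ S ∈ (Finset.Icc 1 N).powerset.filter (fun S => S.Nonempty),
            prEvent p (fun ω => Wbar S ω = g S))
    (hent : ∀ S ∈ (Finset.Icc 1 N).powerset.filter (fun S => S.Nonempty),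
      shannonH p (Wbar S) = (n : ℝ) * R S.card)
    (d : Fin k → ℕ) (hd : Function.Injective d)
    (hdmem : ∀ i, d i ∈ Finset.Icc 1 N) :
    shannonH p (fun ω => fun j : Fin k => fileRV N Wbar (d j) ω)
      - shannonH p (fun ω => fun j : Fin (k-1) =>
          fileRV N Wbar (d (Fin.castLE (Nat.sub_le k 1) j)) ω)
      = (n : ℝ) * ∑ ℓ ∈ Finset.range (N - k + 1),
          (Nat.choose (N - k) ℓ : ℝ) * R (ℓ + 1) := by
  set x := d ⟨k - 1, by omega⟩
  set D := univ.image fun j : Fin (k - 1) => d (Fin.castLE (Nat.sub_le k 1) j)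
  have hxD : x ∉ D := by
    simp only [D, mem_image, mem_univ, true_and, not_exists]
    intro j hj
    have := congrArg Fin.val (hd hj)
    simp only [Fin.val_castLE] at this
    omega
  have hsub : insert x D ⊆ Icc 1 N :=
    insert_subset (hdmem _) (image_subset_iff.2 fun j _ => hdmem _)
  have hcard : #(Icc 1 N \ insert x D) = N - k := by
    have hDcard : #D = k - 1 :=
      (card_image_of_injective _ (hd.comp (Fin.castLE_injective _))).trans (card_fin _)
    rw [card_sdiff_of_subset hsub, card_insert_of_notMem hxD, hDcard, Nat.card_Icc]
    omega
  have hnew : ∑ S ∈ (Icc 1 N).powerset with x ∈ S ∧ Disjoint S D, shannonH p (Wbar S)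
      = ∑ S ∈ (Icc 1 N).powerset with x ∈ S ∧ Disjoint S D, (n : ℝ) * R #S :=
    sum_congr rfl fun S hS =>
      hent S (mem_filter.2 ⟨(mem_filter.1 hS).1, x, (mem_filter.1 hS).2.1⟩)
  rw [shannonH_fileRV_pi hp1 hindep, shannonH_fileRV_pi hp1 hindep,
    Fin.image_univ_eq_insert_image_castLE hk, sum_filter_not_disjoint_insert_sub, hnew,
    sum_powerset_filter_mem_and_disjoint (hsub (mem_insert_self x D)) hxD
      fun c => (n : ℝ) * R c, hcard, mul_sum]
  exact sum_congr rfl fun ℓ _ => by rw [nsmul_eq_mul]; ring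

/-- Conditional entropy of new subfiles: with mutually independent subfiles
`W̄_S` of entropy `n·R_{|S|}`, for distinct demands `d_1,…,d_k`,
`H(W_{d_k} | W_{d_1},…,W_{d_{k-1}}) = n·Σ_{ℓ=0}^{N-k} C(N-k,ℓ)·R_{ℓ+1}`. -/
theorem stmt6 {Ω β : Type*} [Fintype Ω] [Fintype β] [DecidableEq β] [Inhabited β]
    (N n k : ℕ) (hN : 1 ≤ N) (hk : 1 ≤ k) (hkN : k ≤ N)
    (R : ℕ → ℝ) (p : Ω → ℝ)
    (hp0 : ∀ ω, 0 ≤ p ω) (hp1 : ∑ ω : Ω, p ω = 1)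
    (Wbar : Finset ℕ → Ω → β)
    (hindep : ∀ g : Finset ℕ → β,
      prEvent p (fun ω => ∀ S ∈ (Finset.Icc 1 N).powerset.filter (fun S => S.Nonempty),
          Wbar S ω = g S)
        = ∏ S ∈ (Finset.Icc 1 N).powerset.filter (fun S => S.Nonempty),
            prEvent p (fun ω => Wbar S ω = g S))
    (hent : ∀ S ∈ (Finset.Icc 1 N).powerset.filter (fun S => S.Nonempty),
      shannonH p (Wbar S) = (n : ℝ) * R S.card)
    (d : Fin k → ℕ) (hd : Function.Injective d)
    (hdmem : ∀ i, d i ∈ Finset.Icc 1 N) :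
    shannonH p (fun ω => fun j : Fin k => fileRV N Wbar (d j) ω)
      - shannonH p (fun ω => fun j : Fin (k-1) =>
          fileRV N Wbar (d (Fin.castLE (Nat.sub_le k 1) j)) ω)
      = (n : ℝ) * ∑ ℓ ∈ Finset.range (N - k + 1),
          (Nat.choose (N - k) ℓ : ℝ) * R (ℓ + 1) :=
  stmt6_general N n k hk R p hp1 Wbar hindep hent d hd hdmem
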